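/- arXiv:1309.7535 — 4 statements merged into one kernel-verified Lean document; each statement's English description precedes it below -/
import Mathlib

section
/- Let T = A·B be the 11x11 matrix where A is block diagonal with upper-left 4x4 block M = [[2,1,1,1],[-1,0,-1,-1],[-1,-1,0,-1],[-1,-1,-1,0]] and lower-right block the 7x7 identity, and B is the permutation matrix of the permutation (1)(9,10,11,2,3,4,5,6,7,8) on 11 coordinates. Then T preserves the quadratic form q(d, m1, ..., m10) = d^2 - m1^2 - ... - m10^2 on R^11. -/
/-!
`T` is the composite of a permutation of `m₁, …, m₁₀` with the quadratic Cremona transformation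
based at the first three points, which acts by `M` on `(d, m₁, m₂, m₃)` and trivially on the
remaining coordinates. Both are isometries of `d² - ∑ mᵢ²`: the permutation because it fixes `d`,
and the block matrix because `M` is an isometry of `d² - m₁² - m₂² - m₃²`, a four-variable identity.
-/

open Matrix

/-- The Cremona matrix. -/
def M : Matrix (Fin 4) (Fin 4) ℝ :=
  !![2, 1, 1, 1; -1, 0, -1, -1; -1, -1, 0, -1; -1, -1, -1, 0]

/-- Block diagonal matrix with blocks `M` and the 7×7 identity. -/
def A : Matrix (Fin 11) (Fin 11) ℝ :=
  Matrix.reindex finSumFinEquiv finSumFinEquiv (Matrix.fromBlocks M 0 0 (1 : Matrix (Fin 7) (Fin 7) ℝ))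

/-- The permutation (1)(9,10,11,2,3,4,5,6,7,8) (in 1-indexed notation) of 11 coordinates. -/
def σ : Equiv.Perm (Fin 11) where
  toFun := ![0, 2, 3, 4, 5, 6, 7, 8, 9, 10, 1]
  invFun := ![0, 10, 1, 2, 3, 4, 5, 6, 7, 8, 9]
  left_inv := by decide
  right_inv := by decide

/-- The permutation matrix of `σ`. -/
def B : Matrix (Fin 11) (Fin 11) ℝ := σ.permMatrix ℝ

/-- Lesieutre's matrix `T = A · B`. -/
def T : Matrix (Fin 11) (Fin 11) ℝ := A * B

/-- The intersection form `d² - m₁² - ⋯ - m₁₀²` on ℝ¹¹. -/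
def q (v : Fin 11 → ℝ) : ℝ := v 0 ^ 2 - ∑ i : Fin 10, v i.succ ^ 2

variable {ι κ : Type*} [Fintype ι] [Fintype κ]

/-- `v o ^ 2 - ∑_{i ≠ o} v i ^ 2`, written without a sum over the complement of `o`. -/
def lorentzForm (o : ι) (v : ι → ℝ) : ℝ := 2 * v o ^ 2 - ∑ i, v i ^ 2

lemma lorentzForm_comp_equiv (e : κ ≃ ι) (o : κ) (v : ι → ℝ) :
    lorentzForm o (v ∘ e) = lorentzForm (e o) v := by
  simp only [lorentzForm, Function.comp_apply, e.sum_comp fun i => v i ^ 2]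

lemma lorentzForm_sumElim (o : ι) (x : ι → ℝ) (y : κ → ℝ) :
    lorentzForm (Sum.inl o) (Sum.elim x y) = lorentzForm o x - ∑ j, y j ^ 2 := by
  simp only [lorentzForm, Fintype.sum_sum_type, Sum.elim_inl, Sum.elim_inr]
  ring

lemma q_eq_lorentzForm (v : Fin 11 → ℝ) : q v = lorentzForm 0 v := by
  rw [q, lorentzForm, Fin.sum_univ_succ (n := 10)]
  ring

def PreservesLorentzForm (o : ι) (F : Matrix ι ι ℝ) : Prop :=
  ∀ v, lorentzForm o (F *ᵥ v) = lorentzForm o v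

namespace PreservesLorentzForm

variable {o : ι}

lemma mul {F G : Matrix ι ι ℝ} (hF : PreservesLorentzForm o F) (hG : PreservesLorentzForm o G) :
    PreservesLorentzForm o (F * G) := fun v => by
  rw [← mulVec_mulVec, hF, hG]

lemma reindex {F : Matrix κ κ ℝ} {o : κ} (hF : PreservesLorentzForm o F) (e : κ ≃ ι) :
    PreservesLorentzForm (e o) (reindex e e F) := fun v => by
  rw [reindex_apply, submatrix_mulVec_equiv, Equiv.symm_symm, lorentzForm_comp_equiv,
    e.symm_apply_apply, hF, lorentzForm_comp_equiv]

lemma fromBlocks_one [DecidableEq κ] {F : Matrix ι ι ℝ} (hF : PreservesLorentzForm o F) :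
    PreservesLorentzForm (Sum.inl o) (fromBlocks F 0 0 (1 : Matrix κ κ ℝ)) := fun v => by
  rw [fromBlocks_mulVec]
  simp only [zero_mulVec, add_zero, zero_add, one_mulVec]
  rw [lorentzForm_sumElim, hF, ← lorentzForm_sumElim, Sum.elim_comp_inl_inr]

lemma permMatrix [DecidableEq ι] {τ : Equiv.Perm ι} (hτ : τ o = o) :
    PreservesLorentzForm o (τ.permMatrix ℝ) := fun v => by
  rw [permMatrix_mulVec, lorentzForm_comp_equiv, hτ]

end PreservesLorentzForm

lemma M_preservesLorentzForm : PreservesLorentzForm 0 M := fun v => by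
  simp only [lorentzForm, mulVec, dotProduct, M, of_apply, cons_val', cons_val_fin_one,
    cons_val_zero, Fin.sum_univ_four, cons_val_one, one_mul, cons_val, neg_mul, zero_mul, add_zero]
  ring

/-- `T = A·B` preserves the quadratic form `q(d, m₁, …, m₁₀) = d² - m₁² - ⋯ - m₁₀²` on ℝ¹¹. -/
theorem T_preserves_q (v : Fin 11 → ℝ) : q (T.mulVec v) = q v := by
  -- `finSumFinEquiv (Sum.inl 0)` is `0 : Fin 11` by definition
  have hA : PreservesLorentzForm 0 A :=
    (M_preservesLorentzForm.fromBlocks_one (κ := Fin 7)).reindex finSumFinEquiv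
  have hB : PreservesLorentzForm 0 B := PreservesLorentzForm.permMatrix rfl
  rw [q_eq_lorentzForm, q_eq_lorentzForm, T, hA.mul hB]
end

section
/- The matrix T as above has no eigenvalue that is a root of unity other than 1. -/
open Matrix

/-- The matrix `T`, viewed as a complex matrix. -/
noncomputable def Tc : Matrix (Fin 11) (Fin 11) ℂ := T.map (algebraMap ℝ ℂ)

/-!
An eigenvector `v` of `T` for the eigenvalue `z` satisfies `v 5 = z * v 4, …, v 10 = z * v 9` and
`v 1 = z * v 10`, so it is determined by `v 0, v 2, v 3, v 4`, which solve a `4 × 4` linear system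
with determinant `P(z)`, `P = X¹¹ - X⁹ - X⁸ + X³ + X² - 1`. If `z` were a primitive `m`-th root of
unity with `m > 1`, then `Φₘ ∣ P` in `ℤ[X]`, so `φ(m) ≤ 11` and `Φₘ(2)` divides `P(2) = 1291`, a
prime. Since `|Φₘ(2)| > 1`, this forces `1291 ∣ 2ᵐ - 1`, so `m` is a multiple of the order of `2`
modulo `1291`, which is divisible by `43`; but then `42 ≤ φ(m)`.
-/

open Polynomial

theorem IsPrimitiveRoot.cyclotomic_dvd_of_aeval_eq_zero {K : Type*} [Field K] [CharZero K]
    {z : K} {m : ℕ} (hz : IsPrimitiveRoot z m) (hm : 0 < m) {P : ℤ[X]} (hP : aeval z P = 0) :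
    cyclotomic m ℤ ∣ P := by
  rw [cyclotomic_eq_minpoly hz hm]
  exact minpoly.isIntegrallyClosed_dvd (hz.isIntegral hm) hP

theorem orderOf_dvd_of_cyclotomic_dvd_of_eval_prime {P : ℤ[X]} {m q p : ℕ} (hp : p.Prime)
    (hm : 1 < m) (hq : 2 ≤ q) (hdvd : cyclotomic m ℤ ∣ P) (hP : P.eval (q : ℤ) = p) :
    orderOf (q : ZMod p) ∣ m := by
  have hΦp : (cyclotomic m ℤ).eval (q : ℤ) ∣ p := hP ▸ eval_dvd hdvd
  have hΦ_gt : 1 < ((cyclotomic m ℤ).eval (q : ℤ)).natAbs :=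
    lt_of_le_of_lt (by omega) (sub_one_lt_natAbs_cyclotomic_eval hm (by omega))
  have hΦ_eq : ((cyclotomic m ℤ).eval (q : ℤ)).natAbs = p :=
    (hp.eq_one_or_self_of_dvd _ (by simpa using Int.natAbs_dvd_natAbs.mpr hΦp)).resolve_left
      hΦ_gt.ne'
  have hp_dvd : (p : ℤ) ∣ (q : ℤ) ^ m - 1 := by
    refine (Int.natCast_dvd.mpr (dvd_of_eq hΦ_eq.symm)).trans ?_
    simpa using eval_dvd (x := (q : ℤ)) (cyclotomic.dvd_X_pow_sub_one m ℤ)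
  apply orderOf_dvd_of_pow_eq_one
  rw [← sub_eq_zero]
  exact_mod_cast (ZMod.intCast_zmod_eq_zero_iff_dvd _ p).mpr hp_dvd

theorem Nat.sub_one_le_totient_of_prime_dvd {p m : ℕ} (hp : p.Prime) (hpm : p ∣ m) (hm : 0 < m) :
    p - 1 ≤ m.totient := by
  rw [← Nat.totient_prime hp]
  exact Nat.le_of_dvd (Nat.totient_pos.mpr hm) (Nat.totient_dvd_of_dvd hpm)

theorem forty_three_dvd_orderOf_two_zmod_1291 : 43 ∣ orderOf (2 : ZMod 1291) := by
  have h2 : (2 : ZMod 1291) ≠ 0 := by decide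
  have h2_pow_30 : (2 : ZMod 1291) ^ 30 ≠ 1 := by decide
  have : Fact (Nat.Prime 1291) := ⟨by norm_num⟩
  have h1290 : orderOf (2 : ZMod 1291) ∣ 30 * 43 := ZMod.orderOf_dvd_card_sub_one h2
  by_contra h43
  have h30 : orderOf (2 : ZMod 1291) ∣ 30 :=
    ((Nat.Prime.coprime_iff_not_dvd (by norm_num)).mpr h43).symm.dvd_of_dvd_mul_right h1290
  exact h2_pow_30 (orderOf_dvd_iff_pow_eq_one.mp h30)

noncomputable def lesieutrePoly : ℤ[X] := X ^ 11 - X ^ 9 - X ^ 8 + X ^ 3 + X ^ 2 - 1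

lemma natDegree_lesieutrePoly : lesieutrePoly.natDegree = 11 := by
  unfold lesieutrePoly
  compute_degree!

lemma eval_two_lesieutrePoly : lesieutrePoly.eval 2 = 1291 := by
  norm_num [lesieutrePoly]

lemma A_map_mulVec (w : Fin 11 → ℂ) :
    A.map (algebraMap ℝ ℂ) *ᵥ w = ![2 * w 0 + w 1 + w 2 + w 3, -w 0 - w 2 - w 3, -w 0 - w 1 - w 3,
      -w 0 - w 1 - w 2, w 4, w 5, w 6, w 7, w 8, w 9, w 10] := by
  ext i
  simp only [Matrix.mulVec, dotProduct]
  rw [← (finSumFinEquiv : Fin 4 ⊕ Fin 7 ≃ Fin 11).sum_comp, Fintype.sum_sum_type]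
  refine Fin.addCases (m := 4) (n := 7) (fun i => ?_) (fun i => ?_) i <;>
    simp only [A, Matrix.map_apply, Matrix.reindex_apply, Matrix.submatrix_apply,
      Equiv.symm_apply_apply, fromBlocks_apply₁₁, fromBlocks_apply₁₂, fromBlocks_apply₂₁,
      fromBlocks_apply₂₂, finSumFinEquiv_symm_apply_castAdd, finSumFinEquiv_symm_apply_natAdd] <;>
    fin_cases i <;> simp [M, Fin.sum_univ_succ, Matrix.one_apply, finSumFinEquiv] <;> ring

lemma B_map_mulVec (v : Fin 11 → ℂ) : B.map (algebraMap ℝ ℂ) *ᵥ v = v ∘ σ := by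
  rw [B, Equiv.Perm.permMatrix, PEquiv.map_toMatrix, ← Equiv.Perm.permMatrix,
    Matrix.permMatrix_mulVec]

lemma Tc_mulVec (v : Fin 11 → ℂ) :
    Tc *ᵥ v = ![2 * v 0 + v 2 + v 3 + v 4, -v 0 - v 3 - v 4, -v 0 - v 2 - v 4, -v 0 - v 2 - v 3,
      v 5, v 6, v 7, v 8, v 9, v 10, v 1] := by
  rw [Tc, T, Matrix.map_mul, ← Matrix.mulVec_mulVec, B_map_mulVec, A_map_mulVec]
  rfl

lemma Tc_eigenvector_eq {z : ℂ} {v : Fin 11 → ℂ} (hv : Tc *ᵥ v = z • v) :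
    v = ![v 0, z ^ 7 * v 4, v 2, v 3, v 4, z * v 4, z ^ 2 * v 4, z ^ 3 * v 4, z ^ 4 * v 4,
      z ^ 5 * v 4, z ^ 6 * v 4] := by
  rw [Tc_mulVec] at hv
  have e4 : v 5 = z * v 4 := by simpa using congrFun hv 4
  have e5 : v 6 = z * v 5 := by simpa using congrFun hv 5
  have e6 : v 7 = z * v 6 := by simpa using congrFun hv 6
  have e7 : v 8 = z * v 7 := by simpa using congrFun hv 7
  have e8 : v 9 = z * v 8 := by simpa using congrFun hv 8
  have e9 : v 10 = z * v 9 := by simpa using congrFun hv 9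
  have e10 : v 1 = z * v 10 := by simpa using congrFun hv 10
  ext i
  fin_cases i <;> simp [e4, e5, e6, e7, e8, e9, e10] <;> ring

/-- The rows of `Tc - z • 1` indexed by `0, 1, 2, 3`, restricted to the coordinates
`v 0, v 2, v 3, v 4` after substituting `v 1 = z ^ 7 * v 4`. -/
def reducedSystem (z : ℂ) : Matrix (Fin 4) (Fin 4) ℂ :=
  !![2 - z, 1, 1, 1; -1, 0, -1, -1 - z ^ 8; -1, -1 - z, 0, -1; -1, -1, -1 - z, 0]

lemma det_reducedSystem (z : ℂ) : (reducedSystem z).det = aeval z lesieutrePoly := by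
  simp [reducedSystem, lesieutrePoly, Matrix.det_succ_row_zero, Fin.sum_univ_succ, Fin.succAbove]
  ring

lemma reducedSystem_mulVec_eq_zero {z : ℂ} {v : Fin 11 → ℂ} (hv : Tc *ᵥ v = z • v) :
    reducedSystem z *ᵥ ![v 0, v 2, v 3, v 4] = 0 := by
  have hv1 : v 1 = z ^ 7 * v 4 := by simpa using congrFun (Tc_eigenvector_eq hv) 1
  rw [Tc_mulVec] at hv
  have e0 : 2 * v 0 + v 2 + v 3 + v 4 = z * v 0 := by simpa using congrFun hv 0
  have e1 : -v 0 - v 3 - v 4 = z * v 1 := by simpa using congrFun hv 1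
  have e2 : -v 0 - v 2 - v 4 = z * v 2 := by simpa using congrFun hv 2
  have e3 : -v 0 - v 2 - v 3 = z * v 3 := by simpa using congrFun hv 3
  ext i
  fin_cases i <;> simp [reducedSystem, Matrix.mulVec, dotProduct, Fin.sum_univ_succ]
  · linear_combination e0
  · linear_combination e1 + z * hv1
  · linear_combination e2
  · linear_combination e3

lemma aeval_lesieutrePoly_eq_zero_of_mem_spectrum {z : ℂ} (hz : z ∈ spectrum ℂ Tc) :
    aeval z lesieutrePoly = 0 := by
  rw [← Matrix.spectrum_toLin', ← Module.End.hasEigenvalue_iff_mem_spectrum] at hz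
  obtain ⟨v, hv⟩ := hz.exists_hasEigenvector
  have hTv : Tc *ᵥ v = z • v := by simpa using hv.apply_eq_smul
  rw [← det_reducedSystem, ← Matrix.exists_mulVec_eq_zero_iff]
  refine ⟨_, fun h0 => hv.2 ?_, reducedSystem_mulVec_eq_zero hTv⟩
  obtain ⟨h0, h2, h3, h4⟩ : v 0 = 0 ∧ v 2 = 0 ∧ v 3 = 0 ∧ v 4 = 0 := by
    simpa [funext_iff, Fin.forall_fin_succ] using h0
  rw [Tc_eigenvector_eq hTv, h0, h2, h3, h4]
  ext i
  fin_cases i <;> simp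

/-- `T` has no (complex) eigenvalue that is a root of unity other than `1`. -/
theorem T_no_root_of_unity_eigenvalue_except_one :
    ∀ z : ℂ, z ∈ spectrum ℂ Tc → (∃ n : ℕ, 0 < n ∧ z ^ n = 1) → z = 1 := by
  rintro z hz ⟨n, hn, hzn⟩
  by_contra hz1
  set m := orderOf z
  have hm : 1 < m := lt_of_le_of_ne (isOfFinOrder_iff_pow_eq_one.mpr ⟨n, hn, hzn⟩).orderOf_pos
    (fun h => hz1 (orderOf_eq_one_iff.mp h.symm))
  have hdvd : cyclotomic m ℤ ∣ lesieutrePoly :=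
    (IsPrimitiveRoot.orderOf z).cyclotomic_dvd_of_aeval_eq_zero (by omega)
      (aeval_lesieutrePoly_eq_zero_of_mem_spectrum hz)
  have hP0 : lesieutrePoly ≠ 0 := fun h => by simpa [h] using natDegree_lesieutrePoly
  have htot_le : m.totient ≤ 11 := by
    simpa [natDegree_cyclotomic, natDegree_lesieutrePoly] using natDegree_le_of_dvd hdvd hP0
  have h43 : 43 ∣ m := forty_three_dvd_orderOf_two_zmod_1291.trans
    (orderOf_dvd_of_cyclotomic_dvd_of_eval_prime (q := 2) (by norm_num) hm le_rfl hdvd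
      (by exact_mod_cast eval_two_lesieutrePoly))
  have htot_ge := Nat.sub_one_le_totient_of_prime_dvd (by norm_num) h43 (by omega)
  omega
end

section
/- Let λ > 1 be the leading eigenvalue of the matrix T from Lesieutre's construction, and let C_λ = (1, -r1, ..., -r10) be a corresponding eigenvector normalized with first coordinate 1 (i.e. C_λ = H - Σ r_i E_i). Then r1 + r2 + r3 > 1. -/
open Matrix

/-!
The functional `w = (1, 1, 1, 1, 0, …, 0)` satisfies `w M = -w` on the Cremona block, so
`w T = -w B`, while the first row of `T` reads `(T v)₀ = 2 v₀ + v₂ + v₃ + v₄`. For an eigenvector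
`v` these two relations combine to `λ (v₀ + v₁ + v₂ + v₃) = (1 - λ) v₀`. With `v = C_λ` this is
`λ (1 - r₁ - r₂ - r₃) = 1 - λ`, i.e. `r₁ + r₂ + r₃ = 2 - 1/λ`, which exceeds `1` as soon as `λ > 1`.
-/

lemma sum_M_mulVec (u : Fin 4 → ℝ) : ∑ i, (M *ᵥ u) i = -∑ i, u i := by
  simp [M, Fin.sum_univ_four, mulVec, dotProduct]
  ring

lemma M_mulVec_zero (u : Fin 4 → ℝ) : (M *ᵥ u) 0 = u 0 + ∑ i, u i := by
  simp [M, Fin.sum_univ_four, mulVec, dotProduct]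
  ring

lemma A_mulVec_castAdd (w : Fin 11 → ℝ) (i : Fin 4) :
    (A *ᵥ w) (Fin.castAdd 7 i) = (M *ᵥ fun j => w (Fin.castAdd 7 j)) i := by
  rw [A, reindex_apply, submatrix_mulVec_equiv, fromBlocks_mulVec, Function.comp_apply,
    finSumFinEquiv_symm_apply_castAdd, Sum.elim_inl, zero_mulVec, add_zero]
  rfl

lemma T_mulVec_castAdd (v : Fin 11 → ℝ) (i : Fin 4) :
    (T *ᵥ v) (Fin.castAdd 7 i) = (M *ᵥ fun j => v (σ (Fin.castAdd 7 j))) i := by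
  rw [T, ← mulVec_mulVec, A_mulVec_castAdd, B, permMatrix_mulVec]
  rfl

lemma mul_sum_castAdd_of_T_mulVec_eq_smul {μ : ℝ} {v : Fin 11 → ℝ} (hv : T *ᵥ v = μ • v) :
    μ * ∑ i : Fin 4, v (Fin.castAdd 7 i) = (1 - μ) * v 0 := by
  set u : Fin 4 → ℝ := fun j => v (σ (Fin.castAdd 7 j))
  have hcoord (i : Fin 4) : μ * v (Fin.castAdd 7 i) = (M *ᵥ u) i := by
    rw [← T_mulVec_castAdd, hv, Pi.smul_apply, smul_eq_mul]
  have hfirst : μ * v 0 = v 0 + ∑ i, u i := (hcoord 0).trans (M_mulVec_zero u)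
  have hsum : μ * ∑ i : Fin 4, v (Fin.castAdd 7 i) = -∑ i, u i := by
    rw [Finset.mul_sum, ← sum_M_mulVec]
    exact Finset.sum_congr rfl fun i _ => hcoord i
  linarith

/-- If `λ > 1` is the leading eigenvalue of `T` and `C_λ = (1, -r₁, …, -r₁₀)` (that is,
`C_λ = H - ∑ rᵢEᵢ`) is a corresponding eigenvector normalized with first coordinate `1`,
then `r₁ + r₂ + r₃ > 1`. -/
theorem leading_eigenvector_sum_gt_one (lam : ℝ) (r : Fin 10 → ℝ) (Clam : Fin 11 → ℝ)
    (hClam : Clam = Fin.cons 1 (fun i => -(r i)))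
    (hlam : 1 < lam)
    (heig : T.mulVec Clam = lam • Clam) :
    1 < r 0 + r 1 + r 2 := by
  have key := mul_sum_castAdd_of_T_mulVec_eq_smul heig
  have hsum : ∑ i : Fin 4, Clam (Fin.castAdd 7 i) = 1 - (r 0 + r 1 + r 2) := by
    rw [Fin.sum_univ_four, hClam]
    change 1 + -r 0 + -r 1 + -r 2 = _
    ring
  rw [hsum, hClam, Fin.cons_zero] at key
  nlinarith
end

section
/- With t_i as above, for all pairs 1 ≤ i < j ≤ 10, t_i + t_j ≤ 1, and t1 + t2 + t3 = 1. -/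
open Matrix

/-- The class `ℓ̄ = H - E₁ - E₂ - E₃`, as the coefficient vector `(1, -1, -1, -1, 0, …, 0)`. -/
def lbar : Fin 11 → ℝ := ![1, -1, -1, -1, 0, 0, 0, 0, 0, 0, 0]

/-!
Writing the eigenvector as `(1, -r₀, …, -r₉)`, the equation `T v = λ v` says that
`r₃, r₄, …, r₉, r₀` is geometric with ratio `λ` and that `(r₁, r₂, r₃)` solves a 3 × 3 linear
system. Hence `(λ² + λ + 1) rᵢ` is a polynomial in `λ` for every `i`, and `λ` is a root of
`x¹¹ - x⁹ - x⁸ + x³ + x² - 1`, which forces `λ ≤ 13/10`. On `[1, 13/10]` the resulting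
polynomial inequalities give `tᵢ ≤ 1/2` for every `i`, while `t₀ + t₁ + t₂ = 1` is just the
choice of `β`.
-/

theorem T_mulVec (v : Fin 11 → ℝ) :
    T *ᵥ v = ![2 * v 0 + v 2 + v 3 + v 4, -v 0 - v 3 - v 4, -v 0 - v 2 - v 4, -v 0 - v 2 - v 3,
      v 5, v 6, v 7, v 8, v 9, v 10, v 1] := by
  have hT : T = A.submatrix id σ.symm := PEquiv.mul_toMatrix_toPEquiv A σ
  ext i
  fin_cases i <;>
    simp [hT, mulVec, dotProduct, Fin.sum_univ_succ, A, M, σ, finSumFinEquiv, Fin.addCases,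
      sub_eq_add_neg, add_assoc]

theorem T_eigenvector_coeffs {lam : ℝ} {r : Fin 10 → ℝ}
    (heig : T *ᵥ Fin.cons 1 (fun i => -r i) = lam • Fin.cons 1 (fun i => -r i)) :
    (lam ^ 2 + lam + 1) * r 1 = lam ^ 2 ∧ (lam ^ 2 + lam + 1) * r 2 = 1 ∧
      (lam ^ 2 + lam + 1) * r 3 = lam + 1 - lam ^ 3 ∧
      (∀ i : Fin 10, 3 ≤ i → r i = lam ^ (i - 3 : ℕ) * r 3) ∧ r 0 = lam ^ 7 * r 3 ∧
      lam ^ 11 - lam ^ 9 - lam ^ 8 + lam ^ 3 + lam ^ 2 - 1 = 0 := by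
  have hv : (Fin.cons 1 fun i => -r i : Fin 11 → ℝ) =
      ![1, -r 0, -r 1, -r 2, -r 3, -r 4, -r 5, -r 6, -r 7, -r 8, -r 9] := by
    ext i; fin_cases i <;> rfl
  rw [hv, T_mulVec] at heig
  simp only [funext_iff, Fin.forall_fin_succ, Fin.isValue, cons_val_zero, cons_val_one, cons_val,
    cons_val_succ, cons_val_fin_one, smul_cons, smul_empty, smul_eq_mul, mul_one, mul_neg,
    sub_neg_eq_add, neg_inj, forall_const] at heig
  obtain ⟨e0, e1, e2, e3, e4, e5, e6, e7, e8, e9, e10⟩ := heig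
  have h1 : (lam ^ 2 + lam + 1) * r 1 = lam ^ 2 := by
    linear_combination e3 + (1 + lam) * (e0 + e2)
  have h2 : (lam ^ 2 + lam + 1) * r 2 = 1 := by
    linear_combination lam * h1 - (lam ^ 2 + lam + 1) * (e0 + e2)
  have h3 : (lam ^ 2 + lam + 1) * r 3 = lam + 1 - lam ^ 3 := by
    linear_combination -(1 + lam) * h1 + (lam ^ 2 + lam + 1) * e2
  have h0 : r 0 = lam ^ 7 * r 3 := by
    rw [e10, e9, e8, e7, e6, e5, e4]; ring
  refine ⟨h1, h2, h3, ?_, h0, ?_⟩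
  · intro i hi
    fin_cases i <;> simp [Fin.le_def, e4, e5, e6, e7, e8, e9, pow_succ, mul_assoc] at hi ⊢
  · linear_combination -(lam ^ 2 + lam + 1) * e1 + h2 + (1 + lam ^ 8) * h3 +
      lam * (lam ^ 2 + lam + 1) * h0

-- `(x - 1)` times Lehmer's polynomial; its Taylor coefficients at `13/10` are all positive.
theorem eigenvalue_poly_pos_of_gt {x : ℝ} (hx : 13 / 10 < x) :
    0 < x ^ 11 - x ^ 9 - x ^ 8 + x ^ 3 + x ^ 2 - 1 := by
  obtain ⟨y, hy, rfl⟩ : ∃ y, 0 < y ∧ x = 13 / 10 + y := ⟨x - 13 / 10, by linarith, by ring⟩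
  ring_nf
  positivity

theorem eigenvalue_poly_bounds {x : ℝ} (h1 : 1 ≤ x) (h2 : x ≤ 13 / 10) :
    0 ≤ x + 1 - x ^ 3 ∧
      4 * x ^ 6 * (x + 1 - x ^ 3) + x ^ 7 * (x + 1 - x ^ 3) + x ^ 2 + 1 < 3 * (x ^ 2 + x + 1) ∧
      3 * (x ^ 7 * (x + 1 - x ^ 3)) ≤ (x ^ 2 + x + 1) + x ^ 2 + 1 ∧
      3 * x ^ 2 ≤ (x ^ 2 + x + 1) + x ^ 7 * (x + 1 - x ^ 3) + 1 ∧
      3 ≤ (x ^ 2 + x + 1) + x ^ 7 * (x + 1 - x ^ 3) + x ^ 2 := by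
  have B : ∀ k : ℕ, 0 ≤ (x - 1) ^ k * (13 / 10 - x) ^ (10 - k) := fun k =>
    mul_nonneg (pow_nonneg (by linarith) k) (pow_nonneg (by linarith) (10 - k))
  -- Each difference has nonnegative coefficients in the degree-10 Bernstein basis of `[1, 13/10]`.
  refine ⟨?_, ?_, ?_, ?_, ?_⟩ <;>
    linarith [B 0, B 1, B 2, B 3, B 4, B 5, B 6, B 7, B 8, B 9, B 10]

theorem T_eigenvector_bounds {lam : ℝ} {r : Fin 10 → ℝ} (hlam : 1 < lam)
    (heig : T *ᵥ Fin.cons 1 (fun i => -r i) = lam • Fin.cons 1 (fun i => -r i)) :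
    r 0 + r 1 + r 2 < 3 ∧ (∀ i : Fin 10, i < 3 → 4 * r i ≤ 1 + (r 0 + r 1 + r 2)) ∧
      ∀ i : Fin 10, 3 ≤ i → 4 * r i + (r 0 + r 1 + r 2) ≤ 3 := by
  obtain ⟨h1, h2, h3, hgeom, h0, hchar⟩ := T_eigenvector_coeffs heig
  have hle : lam ≤ 13 / 10 := le_of_not_gt fun h => (eigenvalue_poly_pos_of_gt h).ne' hchar
  obtain ⟨hu, hmax, hlow0, hlow1, hlow2⟩ := eigenvalue_poly_bounds hlam.le hle
  set d := lam ^ 2 + lam + 1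
  have hd : 0 < d := by positivity
  have hr3 : 0 ≤ r 3 := nonneg_of_mul_nonneg_right (h3 ▸ hu) hd
  have h0d : d * r 0 = lam ^ 7 * (lam + 1 - lam ^ 3) := by rw [h0, ← h3]; ring
  have h9 : r 9 = lam ^ 6 * r 3 := hgeom 9 (by decide)
  have h9d : d * r 9 = lam ^ 6 * (lam + 1 - lam ^ 3) := by rw [h9, ← h3]; ring
  have hu6 : 0 ≤ lam ^ 6 * (lam + 1 - lam ^ 3) := mul_nonneg (by positivity) hu
  refine ⟨?_, ?_, ?_⟩
  · refine lt_of_mul_lt_mul_left ?_ hd.le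
    linarith
  · intro i hi
    refine le_of_mul_le_mul_left ?_ hd
    fin_cases i <;>
      simp only [Fin.zero_eta, Fin.mk_one, Fin.reduceFinMk, Fin.isValue, Fin.reduceLT,
        lt_self_iff_false] at hi ⊢ <;>
      linarith
  · intro i hi
    have hi9 : r i ≤ r 9 := by
      rw [hgeom i hi, h9]
      exact mul_le_mul_of_nonneg_right (pow_le_pow_right₀ hlam.le (by omega)) hr3
    refine le_of_mul_le_mul_left ?_ hd
    linarith [mul_le_mul_of_nonneg_left hi9 hd.le]

theorem lbar_succ_of_lt {i : Fin 10} (hi : i < 3) : lbar i.succ = -1 := by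
  fin_cases i <;> simp [lbar] at hi ⊢

theorem lbar_succ_of_ge {i : Fin 10} (hi : 3 ≤ i) : lbar i.succ = 0 := by
  fin_cases i <;> simp [lbar, Fin.le_def] at hi ⊢

theorem t_pair_sums_general (lam : ℝ) (r t : Fin 10 → ℝ) (Clam : Fin 11 → ℝ) (β : ℝ)
    (hClam : Clam = Fin.cons 1 (fun i => -(r i)))
    (hlam : 1 < lam)
    (heig : T.mulVec Clam = lam • Clam)
    (hβ : β = (r 0 + r 1 + r 2 - 1) / 2)
    (ht : ∀ i : Fin 10, t i = -((1 / (1 - β)) * (Clam i.succ - β * lbar i.succ))) :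
    (∀ i j : Fin 10, i < j → t i + t j ≤ 1) ∧ t 0 + t 1 + t 2 = 1 := by
  subst hClam
  obtain ⟨hs, hlow, hhigh⟩ := T_eigenvector_bounds hlam heig
  have hβpos : 0 < 1 - β := by rw [hβ]; linarith
  have ht' : ∀ i, t i = (r i + β * lbar i.succ) / (1 - β) := fun i => by
    rw [ht i, Fin.cons_succ]
    field_simp
    ring
  have hhalf : ∀ i, t i ≤ 1 / 2 := by
    intro i
    rw [ht', div_le_iff₀ hβpos]
    rcases lt_or_ge i 3 with hi | hi
    · rw [lbar_succ_of_lt hi]; linarith [hlow i hi]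
    · rw [lbar_succ_of_ge hi]; linarith [hhigh i hi]
  refine ⟨fun i j _ => by linarith [hhalf i, hhalf j], ?_⟩
  rw [ht', ht', ht', ← add_div, ← add_div, div_eq_one_iff_eq hβpos.ne',
    lbar_succ_of_lt (by decide), lbar_succ_of_lt (by decide), lbar_succ_of_lt (by decide)]
  linarith

/-- With `L = H - ∑ tᵢEᵢ` as in Lesieutre's construction: for all pairs `i < j` one has
`tᵢ + tⱼ ≤ 1`, and `t₁ + t₂ + t₃ = 1`. -/
theorem t_pair_sums (lam : ℝ) (r t : Fin 10 → ℝ) (Clam : Fin 11 → ℝ) (β : ℝ)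
    (hClam : Clam = Fin.cons 1 (fun i => -(r i)))
    (hlam : 1 < lam)
    (heig : T.mulVec Clam = lam • Clam)
    (hβ : β = (r 0 + r 1 + r 2 - 1) / 2)
    (hβ1 : β ≠ 1)
    (ht : ∀ i : Fin 10, t i = -((1 / (1 - β)) * (Clam i.succ - β * lbar i.succ))) :
    (∀ i j : Fin 10, i < j → t i + t j ≤ 1) ∧ t 0 + t 1 + t 2 = 1 :=
  t_pair_sums_general lam r t Clam β hClam hlam heig hβ ht
end
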